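/- Suppose m ≥ 3, θ ∈ [0,1], V = (V_1,…,V_m) has distribution ν^{(m)}_θ, and S,T are nonempty disjoint sets with S ∪ T = {1,…,m}. Then ρ(σ(V_i, i∈S), σ(V_i, i∈T)) = θ. -/

import Mathlib

/-!
On the sign cube `{-1, 1}^m`, `ν_θ` has density `1 + θ χ_S χ_T` with respect to the uniform
measure, where `χ_P x = ∏_{i ∈ P} x i` is a Walsh character. A function of `(V_i)_{i ∈ S}` is
`F(V)` with `F` depending only on the coordinates in `S`, and under the uniform measure such
functions are independent of functions of the coordinates in `T`. Hence `F(V)` has the uniform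
mean and variance of `F`, and `Cov(F(V), G(V)) = θ 𝔼[χ_S F] 𝔼[χ_T G]`. Since `χ_S` is centred
with `χ_S² = 1`, Cauchy–Schwarz gives `𝔼[χ_S F]² ≤ Var F`, so every correlation is at most `θ`
in absolute value, and `χ_S(V)`, `χ_T(V)` attain it.
-/

open MeasureTheory ProbabilityTheory

/-- The measure `ν_θ` on `{-1,1}^m` (viewed inside `Fin m → ℤ`), giving mass
`(1+θ)/2^m` to each point of `{-1,1}^m` with coordinate product `1` and
`(1-θ)/2^m` to each point of `{-1,1}^m` with coordinate product `-1`. -/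
noncomputable def nu (m : ℕ) (θ : ℝ) : MeasureTheory.Measure (Fin m → ℤ) :=
  MeasureTheory.Measure.sum (fun x : Fin m → ℤ =>
    (if ∀ i, x i = 1 ∨ x i = -1 then
        ENNReal.ofReal (if ∏ i, x i = 1 then (1 + θ) / 2 ^ m else (1 - θ) / 2 ^ m)
      else 0) • MeasureTheory.Measure.dirac x)

noncomputable def alphaDep {Ω : Type*} (F : MeasurableSpace Ω) (μ : @MeasureTheory.Measure Ω F)
    (A B : MeasurableSpace Ω) : ℝ :=
  sSup {r : ℝ | ∃ a b : Set Ω, MeasurableSet[A] a ∧ MeasurableSet[B] b ∧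
    r = |(μ (a ∩ b)).toReal - (μ a).toReal * (μ b).toReal|}

noncomputable def rhoDep {Ω : Type*} (F : MeasurableSpace Ω) (μ : @MeasureTheory.Measure Ω F)
    (A B : MeasurableSpace Ω) : ℝ :=
  sSup {r : ℝ | ∃ f g : Ω → ℝ, Measurable[A] f ∧ Measurable[B] g ∧
    MeasureTheory.MemLp f 2 μ ∧ MeasureTheory.MemLp g 2 μ ∧
    0 < ProbabilityTheory.variance f μ ∧ 0 < ProbabilityTheory.variance g μ ∧
    r = |(∫ ω, f ω * g ω ∂μ - (∫ ω, f ω ∂μ) * ∫ ω, g ω ∂μ) /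
        (Real.sqrt (ProbabilityTheory.variance f μ) *
         Real.sqrt (ProbabilityTheory.variance g μ))|}

open Finset
open Fintype (piFinset mem_piFinset)
open scoped BigOperators

lemma DependsOn.mul {ι R : Type*} {α : ι → Type*} [Mul R] {s : Set ι} {F G : (∀ i, α i) → R}
    (hF : DependsOn F s) (hG : DependsOn G s) : DependsOn (fun x => F x * G x) s :=
  fun _ _ h => congrArg₂ (· * ·) (hF h) (hG h)

section ProductSet

variable {ι : Type*} [Fintype ι] [DecidableEq ι] {α : ι → Type*}

lemma piecewise_mem_piFinset {t : ∀ i, Finset (α i)} (s : Finset ι) {x y : ∀ i, α i}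
    (hx : x ∈ piFinset t) (hy : y ∈ piFinset t) : s.piecewise x y ∈ piFinset t := by
  rw [mem_piFinset] at *
  intro i
  by_cases hi : i ∈ s <;> simp [hi, hx i, hy i]

lemma expect_expect_piecewise_piFinset {M : Type*} [AddCommMonoid M] [Module ℚ≥0 M]
    (t : ∀ i, Finset (α i)) (s : Finset ι) (H : (∀ i, α i) → M) :
    𝔼 x ∈ piFinset t, 𝔼 y ∈ piFinset t, H (s.piecewise x y) = 𝔼 x ∈ piFinset t, H x := by
  by_cases hc : (piFinset t).Nonempty
  swap
  · simp [not_nonempty_iff_eq_empty.1 hc]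
  -- exchanging the coordinates of `x` and `y` outside `s` permutes the pairs
  let σ : (∀ i, α i) × (∀ i, α i) → (∀ i, α i) × (∀ i, α i) :=
    fun p => (s.piecewise p.1 p.2, s.piecewise p.2 p.1)
  have hσσ : ∀ p, σ (σ p) = p := fun p => by
    ext i <;> by_cases hi : i ∈ s <;> simp [σ, hi]
  have hσ : ∀ p ∈ piFinset t ×ˢ piFinset t, σ p ∈ piFinset t ×ˢ piFinset t := by
    rintro ⟨x, y⟩ hp
    rw [mem_product] at hp ⊢
    exact ⟨piecewise_mem_piFinset s hp.1 hp.2, piecewise_mem_piFinset s hp.2 hp.1⟩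
  calc 𝔼 x ∈ piFinset t, 𝔼 y ∈ piFinset t, H (s.piecewise x y)
      = 𝔼 p ∈ piFinset t ×ˢ piFinset t, H (σ p).1 := (expect_product' _ _ _).symm
    _ = 𝔼 p ∈ piFinset t ×ˢ piFinset t, H p.1 :=
        expect_nbij' σ σ hσ hσ (fun p _ => hσσ p) (fun p _ => hσσ p) fun _ _ => rfl
    _ = 𝔼 x ∈ piFinset t, H x := by
        rw [expect_product' (f := fun x _ => H x)]
        exact expect_congr rfl fun x _ => expect_const hc _

lemma expect_piFinset_mul_of_dependsOn {R : Type*} [CommSemiring R] [Module ℚ≥0 R]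
    [IsScalarTower ℚ≥0 R R] [SMulCommClass ℚ≥0 R R] (t : ∀ i, Finset (α i)) {s u : Finset ι}
    (hsu : Disjoint s u) {F G : (∀ i, α i) → R} (hF : DependsOn F s) (hG : DependsOn G u) :
    𝔼 x ∈ piFinset t, F x * G x = (𝔼 x ∈ piFinset t, F x) * 𝔼 x ∈ piFinset t, G x := by
  have hF' : ∀ x y, F (s.piecewise x y) = F x := fun x y =>
    hF fun i hi => s.piecewise_eq_of_mem _ _ hi
  have hG' : ∀ x y, G (s.piecewise x y) = G y := fun x y =>
    hG fun i hi => s.piecewise_eq_of_notMem _ _ (disjoint_right.1 hsu hi)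
  rw [← expect_expect_piecewise_piFinset t s, Finset.expect_mul_expect]
  simp only [hF', hG']

end ProductSet

lemma sq_expect_mul_le_expect_sq_sub {κ K : Type*} [Field K] [LinearOrder K]
    [IsStrictOrderedRing K] (s : Finset κ) {χ F : κ → K} (hχ : 𝔼 i ∈ s, χ i = 0)
    (hχ_sq : ∀ i ∈ s, χ i ^ 2 = 1) :
    (𝔼 i ∈ s, χ i * F i) ^ 2 ≤ 𝔼 i ∈ s, (F i - 𝔼 j ∈ s, F j) ^ 2 := by
  rcases s.eq_empty_or_nonempty with rfl | hs
  · simp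
  set c := 𝔼 j ∈ s, F j
  have hcentre : 𝔼 i ∈ s, χ i * F i = 𝔼 i ∈ s, χ i * (F i - c) := by
    simp_rw [mul_sub, expect_sub_distrib, ← expect_mul, hχ, zero_mul, sub_zero]
  calc (𝔼 i ∈ s, χ i * F i) ^ 2
      ≤ (𝔼 i ∈ s, χ i ^ 2) * 𝔼 i ∈ s, (F i - c) ^ 2 :=
        hcentre ▸ expect_mul_sq_le_sq_mul_sq _ _ _
    _ = 𝔼 i ∈ s, (F i - c) ^ 2 := by rw [expect_congr rfl hχ_sq, expect_const hs, one_mul]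

-- reducible, so that lemmas about `piFinset` apply to it
abbrev signCube (ι : Type*) [Fintype ι] [DecidableEq ι] : Finset (ι → ℤ) :=
  piFinset fun _ => {1, -1}

section Walsh

variable {ι : Type*}

noncomputable def walsh (P : Finset ι) (x : ι → ℤ) : ℝ :=
  ∏ i ∈ P, (x i : ℝ)

lemma dependsOn_walsh (P : Finset ι) : DependsOn (walsh P) P :=
  fun _ _ h => prod_congr rfl fun i hi => by rw [h i hi]

variable [Fintype ι] [DecidableEq ι]

lemma walsh_univ_of_isCompl {P Q : Finset ι} (h : IsCompl P Q) (x : ι → ℤ) :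
    walsh univ x = walsh P x * walsh Q x := by
  rw [walsh, walsh, walsh, ← prod_union h.disjoint, ← sup_eq_union, h.sup_eq_top, top_eq_univ]

lemma mem_signCube {x : ι → ℤ} : x ∈ signCube ι ↔ ∀ i, x i = 1 ∨ x i = -1 := by
  simp

lemma signCube_nonempty : (signCube ι).Nonempty :=
  ⟨fun _ => 1, mem_signCube.2 fun _ => Or.inl rfl⟩

lemma card_signCube : #(signCube ι) = 2 ^ Fintype.card ι := by
  simp

lemma walsh_sq_of_mem_signCube {x : ι → ℤ} (hx : x ∈ signCube ι) (P : Finset ι) :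
    walsh P x ^ 2 = 1 := by
  rw [walsh, ← prod_pow]
  exact prod_eq_one fun i _ => by rcases mem_signCube.1 hx i with h | h <;> simp [h]

lemma abs_walsh_le_one_of_mem_signCube {x : ι → ℤ} (hx : x ∈ signCube ι) (P : Finset ι) :
    |walsh P x| ≤ 1 :=
  (sq_le_one_iff_abs_le_one _).1 (walsh_sq_of_mem_signCube hx P).le

lemma expect_walsh {P : Finset ι} (hP : P.Nonempty) : 𝔼 x ∈ signCube ι, walsh P x = 0 := by
  obtain ⟨i₀, hi₀⟩ := hP
  suffices ∑ x ∈ signCube ι, walsh P x = 0 by simp [expect, this]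
  have hwalsh : ∀ x, walsh P x = ∏ i, if i ∈ P then (x i : ℝ) else 1 := fun x => by
    rw [walsh, prod_ite_mem, univ_inter]
  simp_rw [hwalsh]
  rw [← prod_univ_sum (fun _ => {1, -1}) fun i (a : ℤ) => if i ∈ P then (a : ℝ) else 1]
  exact prod_eq_zero (mem_univ i₀) (by simp [hi₀])

lemma expect_walsh_sq (P : Finset ι) : 𝔼 x ∈ signCube ι, walsh P x ^ 2 = 1 := by
  rw [expect_congr rfl fun x hx => walsh_sq_of_mem_signCube hx P, expect_const signCube_nonempty]

end Walsh

/-- Pearson correlation, written as in `rhoDep`; it is `0` when a variance vanishes. -/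
noncomputable def correlation {Ω : Type*} [MeasurableSpace Ω] (μ : Measure Ω) (f g : Ω → ℝ) :
    ℝ :=
  (∫ ω, f ω * g ω ∂μ - (∫ ω, f ω ∂μ) * ∫ ω, g ω ∂μ) / (√(variance f μ) * √(variance g μ))

lemma correlation_map {Ω Ω' : Type*} [MeasurableSpace Ω] [MeasurableSpace Ω'] {μ : Measure Ω}
    {Y : Ω → Ω'} (hY : AEMeasurable Y μ) {f g : Ω' → ℝ} (hf : AEMeasurable f (μ.map Y))
    (hg : AEMeasurable g (μ.map Y)) :
    correlation (μ.map Y) f g = correlation μ (f ∘ Y) (g ∘ Y) := by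
  rw [correlation, correlation, variance_map hf hY, variance_map hg hY,
    integral_map hY hf.aestronglyMeasurable, integral_map hY hg.aestronglyMeasurable,
    integral_map (f := fun ω => f ω * g ω) hY (hf.mul hg).aestronglyMeasurable]
  rfl

lemma exists_dependsOn_of_measurable_iSup_comap {Ω ι β γ : Type*} [MeasurableSpace β]
    [MeasurableSpace γ] [MeasurableSingletonClass γ] [Nonempty γ] {X : Ω → ι → β} {s : Set ι}
    {f : Ω → γ} (hf : Measurable[⨆ i ∈ s, MeasurableSpace.comap (fun ω => X ω i) inferInstance] f) :
    ∃ F : (ι → β) → γ, DependsOn F s ∧ f = F ∘ X := by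
  have hle : (⨆ i ∈ s, MeasurableSpace.comap (fun ω => X ω i) inferInstance) ≤
      MeasurableSpace.comap (fun ω => s.domRestrict (X ω)) inferInstance := by
    refine iSup₂_le fun i hi => ?_
    rw [show (fun ω => X ω i) = (fun y : s → β => y ⟨i, hi⟩) ∘ fun ω => s.domRestrict (X ω)
      from rfl, ← MeasurableSpace.comap_comp]
    exact MeasurableSpace.comap_mono (measurable_pi_apply _).comap_le
  obtain ⟨h, rfl⟩ := (Function.factorsThrough_iff _).1 (hf.mono hle le_rfl).factorsThrough
  exact ⟨h ∘ s.domRestrict, fun _ _ hxy => congrArg h (Set.dependsOn_domRestrict s hxy), rfl⟩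

lemma measurable_walsh_comp_iSup_comap {Ω ι : Type*} (X : Ω → ι → ℤ) (P : Finset ι) :
    Measurable[⨆ i ∈ P, MeasurableSpace.comap (fun ω => X ω i) inferInstance]
      (fun ω => walsh P (X ω)) :=
  Finset.measurable_prod _ fun i hi => (measurable_of_countable (fun n : ℤ => (n : ℝ))).comp
    ((comap_measurable _).mono (le_iSup₂ (f := fun j (_ : j ∈ P) =>
      MeasurableSpace.comap (fun ω => X ω j) inferInstance) i hi) le_rfl)

section Nu

variable {m : ℕ} {θ : ℝ}

lemma nu_eq_sum_dirac (m : ℕ) (θ : ℝ) :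
    nu m θ = ∑ x ∈ signCube (Fin m),
      ENNReal.ofReal (if ∏ i, x i = 1 then (1 + θ) / 2 ^ m else (1 - θ) / 2 ^ m) •
        Measure.dirac x := by
  ext s hs
  rw [nu, Measure.sum_apply _ hs, Measure.finsetSum_apply, tsum_eq_sum (s := signCube (Fin m))]
  · exact sum_congr rfl fun x hx => by rw [if_pos (mem_signCube.1 hx)]
  · intro x hx
    rw [if_neg (mt mem_signCube.2 hx), zero_smul, Measure.coe_zero, Pi.zero_apply]

lemma ae_nu_mem_signCube : ∀ᵐ x ∂nu m θ, x ∈ signCube (Fin m) := by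
  rw [ae_iff, nu_eq_sum_dirac, Measure.finsetSum_apply]
  refine sum_eq_zero fun x hx => ?_
  rw [Measure.smul_apply, Measure.dirac_apply, Set.indicator_of_notMem (not_not.2 hx), smul_zero]

lemma nu_weight_eq {x : Fin m → ℤ} (hx : x ∈ signCube (Fin m)) :
    (if ∏ i, x i = 1 then (1 + θ) / 2 ^ m else (1 - θ) / 2 ^ m) =
      (1 + θ * walsh univ x) / 2 ^ m := by
  have hcast : walsh univ x = ((∏ i, x i : ℤ) : ℝ) := by simp [walsh]
  rcases sq_eq_one_iff.1 (walsh_sq_of_mem_signCube hx univ) with h | h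
  · have hprod : ∏ i, x i = 1 := by exact_mod_cast hcast ▸ h
    rw [if_pos hprod, h, mul_one]
  · have hprod : ∏ i, x i = -1 := by exact_mod_cast hcast ▸ h
    rw [if_neg (by rw [hprod]; decide), h]
    ring

lemma integral_nu (hθ : |θ| ≤ 1) (Φ : (Fin m → ℤ) → ℝ) :
    ∫ x, Φ x ∂nu m θ = 𝔼 x ∈ signCube (Fin m), (1 + θ * walsh univ x) * Φ x := by
  rw [nu_eq_sum_dirac, integral_finsetSum_measure fun x _ =>
      ((integrable_const (Φ x)).congr (ae_eq_dirac Φ).symm).smul_measure ENNReal.ofReal_ne_top,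
    expect_eq_sum_div_card, card_signCube, sum_div]
  refine sum_congr rfl fun x hx => ?_
  have hweight : 0 ≤ 1 + θ * walsh univ x := by
    have : |θ * walsh univ x| ≤ 1 := by
      rw [abs_mul]
      exact mul_le_one₀ hθ (abs_nonneg _) (abs_walsh_le_one_of_mem_signCube hx univ)
    linarith [neg_abs_le (θ * walsh univ x)]
  rw [integral_smul_measure, integral_dirac, nu_weight_eq hx,
    ENNReal.toReal_ofReal (by positivity), smul_eq_mul, Fintype.card_fin]
  push_cast
  ring

variable {S T : Finset (Fin m)} {F G : (Fin m → ℤ) → ℝ}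

lemma integral_nu_mul_of_dependsOn (hθ : |θ| ≤ 1) (hST : IsCompl S T)
    (hF : DependsOn F S) (hG : DependsOn G T) :
    ∫ x, F x * G x ∂nu m θ =
      (𝔼 x ∈ signCube (Fin m), F x) * (𝔼 x ∈ signCube (Fin m), G x) +
        θ * ((𝔼 x ∈ signCube (Fin m), walsh S x * F x) *
          𝔼 x ∈ signCube (Fin m), walsh T x * G x) := by
  have hsplit : ∀ x, (1 + θ * walsh univ x) * (F x * G x) =
      F x * G x + θ * ((walsh S x * F x) * (walsh T x * G x)) := fun x => by
    rw [walsh_univ_of_isCompl hST]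
    ring
  rw [integral_nu hθ]
  simp_rw [hsplit, expect_add_distrib, ← mul_expect,
    expect_piFinset_mul_of_dependsOn _ hST.disjoint hF hG,
    expect_piFinset_mul_of_dependsOn _ hST.disjoint ((dependsOn_walsh S).mul hF)
      ((dependsOn_walsh T).mul hG)]

lemma integral_nu_of_dependsOn (hθ : |θ| ≤ 1) (hST : IsCompl S T)
    (hT : T.Nonempty) (hF : DependsOn F S) :
    ∫ x, F x ∂nu m θ = 𝔼 x ∈ signCube (Fin m), F x := by
  simpa [expect_walsh hT, expect_const signCube_nonempty] using
    integral_nu_mul_of_dependsOn hθ hST hF (G := fun _ => 1) fun _ _ _ => rfl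

lemma variance_nu_of_dependsOn (hθ : |θ| ≤ 1) (hST : IsCompl S T)
    (hT : T.Nonempty) (hF : DependsOn F S) :
    variance F (nu m θ) = 𝔼 x ∈ signCube (Fin m), (F x - 𝔼 y ∈ signCube (Fin m), F y) ^ 2 := by
  rw [variance_eq_integral (measurable_of_countable F).aemeasurable,
    integral_nu_of_dependsOn hθ hST hT hF]
  exact integral_nu_of_dependsOn hθ hST hT fun _ _ h => by simp only [hF h]

lemma sq_expect_walsh_mul_le_variance_nu (hθ : |θ| ≤ 1) (hST : IsCompl S T)
    (hS : S.Nonempty) (hT : T.Nonempty) (hF : DependsOn F S) :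
    (𝔼 x ∈ signCube (Fin m), walsh S x * F x) ^ 2 ≤ variance F (nu m θ) := by
  rw [variance_nu_of_dependsOn hθ hST hT hF]
  exact sq_expect_mul_le_expect_sq_sub _ (expect_walsh hS) fun x hx => walsh_sq_of_mem_signCube hx S

lemma integral_nu_mul_sub_mul_of_dependsOn (hθ : |θ| ≤ 1) (hST : IsCompl S T)
    (hS : S.Nonempty) (hT : T.Nonempty) (hF : DependsOn F S)
    (hG : DependsOn G T) :
    ∫ x, F x * G x ∂nu m θ - (∫ x, F x ∂nu m θ) * ∫ x, G x ∂nu m θ =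
      θ * ((𝔼 x ∈ signCube (Fin m), walsh S x * F x) *
        𝔼 x ∈ signCube (Fin m), walsh T x * G x) := by
  rw [integral_nu_mul_of_dependsOn hθ hST hF hG, integral_nu_of_dependsOn hθ hST hT hF,
    integral_nu_of_dependsOn hθ hST.symm hS hG, add_sub_cancel_left]

lemma abs_correlation_nu_le (hθ : θ ∈ Set.Icc 0 1) (hST : IsCompl S T)
    (hS : S.Nonempty) (hT : T.Nonempty) (hF : DependsOn F S) (hG : DependsOn G T) :
    |correlation (nu m θ) F G| ≤ θ := by
  have hθ' : |θ| ≤ 1 := abs_le.2 ⟨by linarith [hθ.1], hθ.2⟩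
  have ha := Real.abs_le_sqrt (sq_expect_walsh_mul_le_variance_nu hθ' hST hS hT hF)
  have hb := Real.abs_le_sqrt (sq_expect_walsh_mul_le_variance_nu hθ' hST.symm hT hS hG)
  rw [correlation, integral_nu_mul_sub_mul_of_dependsOn hθ' hST hS hT hF hG, abs_div,
    abs_of_nonneg (by positivity : 0 ≤ √(variance F (nu m θ)) * √(variance G (nu m θ)))]
  refine div_le_of_le_mul₀ (by positivity) hθ.1 ?_
  rw [abs_mul, abs_mul, abs_of_nonneg hθ.1]
  exact mul_le_mul_of_nonneg_left (mul_le_mul ha hb (abs_nonneg _) (Real.sqrt_nonneg _)) hθ.1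

lemma variance_nu_walsh (hθ : |θ| ≤ 1) (hST : IsCompl S T)
    (hS : S.Nonempty) (hT : T.Nonempty) : variance (walsh S) (nu m θ) = 1 := by
  rw [variance_nu_of_dependsOn hθ hST hT (dependsOn_walsh S), expect_walsh hS]
  simpa using expect_walsh_sq S

lemma correlation_nu_walsh (hθ : |θ| ≤ 1) (hST : IsCompl S T)
    (hS : S.Nonempty) (hT : T.Nonempty) : correlation (nu m θ) (walsh S) (walsh T) = θ := by
  rw [correlation, integral_nu_mul_sub_mul_of_dependsOn hθ hST hS hT (dependsOn_walsh S)
      (dependsOn_walsh T), variance_nu_walsh hθ hST hS hT,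
    variance_nu_walsh hθ hST.symm hT hS]
  simp [← sq, expect_walsh_sq]

end Nu

theorem stmt10_general {Ω : Type*} {F : MeasurableSpace Ω} (μ : Measure Ω) [IsProbabilityMeasure μ]
    (m : ℕ) (θ : ℝ) (hθ : θ ∈ Set.Icc (0 : ℝ) 1)
    (V : Ω → Fin m → ℤ) (hV : Measurable V) (hlaw : Measure.map V μ = nu m θ)
    (S T : Finset (Fin m)) (hSne : S.Nonempty) (hTne : T.Nonempty)
    (hdisj : Disjoint S T) (hunion : S ∪ T = Finset.univ) :
    rhoDep F μ (⨆ i ∈ S, MeasurableSpace.comap (fun ω => V ω i) inferInstance)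
      (⨆ i ∈ T, MeasurableSpace.comap (fun ω => V ω i) inferInstance) = θ := by
  have hθ' : |θ| ≤ 1 := abs_le.2 ⟨by linarith [hθ.1], hθ.2⟩
  have hST : IsCompl S T := ⟨hdisj, codisjoint_iff.2 hunion⟩
  have hcorr : ∀ Φ Ψ : (Fin m → ℤ) → ℝ,
      correlation μ (Φ ∘ V) (Ψ ∘ V) = correlation (nu m θ) Φ Ψ := fun Φ Ψ => by
    rw [← hlaw, correlation_map hV.aemeasurable (measurable_of_countable Φ).aemeasurable
      (measurable_of_countable Ψ).aemeasurable]
  have hvar : ∀ {P Q : Finset (Fin m)}, IsCompl P Q → P.Nonempty → Q.Nonempty →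
      0 < variance (walsh P ∘ V) μ := fun hPQ hP hQ => by
    rw [← variance_map (measurable_of_countable _).aemeasurable hV.aemeasurable, hlaw,
      variance_nu_walsh hθ' hPQ hP hQ]
    exact one_pos
  have hmemLp : ∀ P, MemLp (walsh P ∘ V) 2 μ := fun P =>
    MemLp.of_bound ((measurable_of_countable _).comp hV).aestronglyMeasurable 1 <|
      (ae_of_ae_map hV.aemeasurable (hlaw ▸ ae_nu_mem_signCube)).mono fun _ hω =>
        abs_walsh_le_one_of_mem_signCube hω P
  refine IsGreatest.csSup_eq ⟨⟨walsh S ∘ V, walsh T ∘ V, measurable_walsh_comp_iSup_comap V S,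
    measurable_walsh_comp_iSup_comap V T, hmemLp S, hmemLp T, hvar hST hSne hTne,
    hvar hST.symm hTne hSne, ?_⟩, ?_⟩
  · change θ = |correlation μ _ _|
    rw [hcorr, correlation_nu_walsh hθ' hST hSne hTne, abs_of_nonneg hθ.1]
  · rintro r ⟨f, g, hf, hg, -, -, -, -, rfl⟩
    obtain ⟨Φ, hΦ, rfl⟩ := exists_dependsOn_of_measurable_iSup_comap hf
    obtain ⟨Ψ, hΨ, rfl⟩ := exists_dependsOn_of_measurable_iSup_comap hg
    change |correlation μ (Φ ∘ V) (Ψ ∘ V)| ≤ θ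
    rw [hcorr]
    exact abs_correlation_nu_le hθ hST hSne hTne hΦ hΨ

theorem stmt10 {Ω : Type*} {F : MeasurableSpace Ω} (μ : Measure Ω) [IsProbabilityMeasure μ]
    (m : ℕ) (hm : 3 ≤ m) (θ : ℝ) (hθ : θ ∈ Set.Icc (0 : ℝ) 1)
    (V : Ω → Fin m → ℤ) (hV : Measurable V) (hlaw : Measure.map V μ = nu m θ)
    (S T : Finset (Fin m)) (hSne : S.Nonempty) (hTne : T.Nonempty)
    (hdisj : Disjoint S T) (hunion : S ∪ T = Finset.univ) :
    rhoDep F μ (⨆ i ∈ S, MeasurableSpace.comap (fun ω => V ω i) inferInstance)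
      (⨆ i ∈ T, MeasurableSpace.comap (fun ω => V ω i) inferInstance) = θ :=
  stmt10_general μ m θ hθ V hV hlaw S T hSne hTne hdisj hunion
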